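/- arXiv:1611.07008 — 5 statements merged into one kernel-verified Lean document; each statement's English description precedes it below -/
import Mathlib

section
/- Let G = (V, E, w) be a finite simple undirected graph with positive integer edge weights, and let C = ⟨v₁, v₂, …, v_l⟩ be a (simple) cycle in G of total weight w(C). Then there exists an edge (v_p, v_{p+1}) on C (indices taken cyclically, so v_{l+1} = v₁) such that ⌈w(C)/2⌉ − w(v_p, v_{p+1}) ≤ d_C(v₁, v_p) ≤ ⌊w(C)/2⌋ and ⌈w(C)/2⌉ − w(v_p, v_{p+1}) ≤ d_C(v_{p+1}, v₁) ≤ ⌊w(C)/2⌋. (Such an edge is called a critical edge of C with respect to the start vertex v₁.) -/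
lemma edges_getElem' {V : Type*} {G : SimpleGraph V} {u v : V} (p : G.Walk u v) (t : ℕ)
    (ht : t < p.edges.length) :
    p.edges[t] = s(p.getVert t, p.getVert (t+1)) := by
  induction p generalizing t with
  | nil => simp at ht
  | cons h q ih =>
    cases t with
    | zero => simp
    | succ t => simpa using ih t (by simpa using ht)

/-- critical edge of a cycle.  `G` is a finite simple undirected graph with
positive integer edge weights `w`, and `C = ⟨v₁, v₂, …⟩` is a cycle in `G`, based at `v₁`.
Write `wC` for the total weight of `C`, `pre t` for the weight of the arc of `C` consisting
of its first `t` edges (so `v₁ = C.getVert 0` and the vertex `v_{p+1}` of the paper is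
`C.getVert p` in 0-indexed form), and `d_C(v₁, C.getVert t) = min (pre t) (wC - pre t)`,
the minimum of the weights of the two arcs of `C` between `v₁` and `C.getVert t`.
Then some edge `(C.getVert p, C.getVert (p+1))` of `C` satisfies
`⌈wC/2⌉ - w(edge) ≤ d_C(v₁, C.getVert p) ≤ ⌊wC/2⌋` and
`⌈wC/2⌉ - w(edge) ≤ d_C(C.getVert (p+1), v₁) ≤ ⌊wC/2⌋`. -/
theorem stmt0 {V : Type*} [Fintype V] (G : SimpleGraph V) (w : Sym2 V → ℕ)
    (hw : ∀ e ∈ G.edgeSet, 0 < w e)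
    (v₁ : V) (C : G.Walk v₁ v₁) (hC : C.IsCycle) :
    ∃ p < C.length,
      (let wC : ℕ := (C.edges.map w).sum
       let pre : ℕ → ℕ := fun t => ((C.edges.take t).map w).sum
       let we : ℕ := w s(C.getVert p, C.getVert (p + 1))
       let d₁ : ℕ := min (pre p) (wC - pre p)
       let d₂ : ℕ := min (pre (p + 1)) (wC - pre (p + 1))
       (wC + 1) / 2 - we ≤ d₁ ∧ d₁ ≤ wC / 2 ∧
         (wC + 1) / 2 - we ≤ d₂ ∧ d₂ ≤ wC / 2) := by
  classical
  set n := C.length with hn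
  have hn3 : 3 ≤ n := hC.three_le_length
  set wC : ℕ := (C.edges.map w).sum with hwC
  set pre : ℕ → ℕ := fun t => ((C.edges.take t).map w).sum with hpre
  have hlen : C.edges.length = n := C.length_edges
  have hpren : pre n = wC := by
    simp only [hpre, hwC, ← hlen, List.take_length]
  have hstep : ∀ t, t < n → pre (t+1) = pre t + w s(C.getVert t, C.getVert (t+1)) := by
    intro t ht
    have ht' : t < C.edges.length := by omega
    have h1 : C.edges.take (t+1) = C.edges.take t ++ [C.edges[t]] := by
      rw [List.take_succ, List.getElem?_eq_getElem ht']; rfl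
    simp only [hpre, h1, List.map_append, List.sum_append, List.map_cons, List.map_nil,
      List.sum_cons, List.sum_nil, edges_getElem' C t ht', add_zero]
  set P : ℕ → Prop := fun t => pre t ≤ wC / 2 with hP
  have hP0 : P 0 := by simp [hP, hpre]
  set p := Nat.findGreatest P (n - 1) with hpdef
  have hple : p ≤ n - 1 := Nat.findGreatest_le _
  have hplt : p < n := by omega
  have hPp : pre p ≤ wC / 2 := Nat.findGreatest_spec (Nat.zero_le _) hP0
  have hkey : (wC + 1) / 2 ≤ pre (p + 1) := by
    rcases eq_or_lt_of_le (show p + 1 ≤ n by omega) with h | h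
    · rw [h, hpren]; omega
    · have hnp : ¬ P (p + 1) :=
        Nat.findGreatest_is_greatest (P := P) (n := n - 1) (k := p + 1) (by omega) (by omega)
      simp only [hP, not_le] at hnp
      omega
  have hle : pre (p+1) ≤ wC := by
    rw [hpre, hwC]
    exact List.Sublist.sum_le_sum ((C.edges.take_sublist (p+1)).map w) (by simp)
  refine ⟨p, hplt, ?_⟩
  show (wC + 1) / 2 - w s(C.getVert p, C.getVert (p + 1)) ≤ min (pre p) (wC - pre p) ∧
    min (pre p) (wC - pre p) ≤ wC / 2 ∧
    (wC + 1) / 2 - w s(C.getVert p, C.getVert (p + 1)) ≤ min (pre (p+1)) (wC - pre (p+1)) ∧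
    min (pre (p+1)) (wC - pre (p+1)) ≤ wC / 2
  have hstepp := hstep p hplt
  omega
end

section
/- Suppose there exist i ∈ {1, …, ⌈log₂ n⌉}, j ∈ {0, 1}, k ∈ {1, …, ⌈log₂ ρ⌉}, distinct vertices y, z ∈ V, a shortest path π from y¹ to z² in G_{i,j,k}, and a shortest path σ from y to z in G, such that: (1) w(π) + w(σ) = wt; (2) the predecessor of z² on π, viewed as a vertex of V, is different from the predecessor of z on σ; and (3) w(π) ≤ w(σ) + M/2^{k−1}. Then G contains a simple cycle through z of weight at most wt. -/
namespace Stmt3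

/-- The weight of a walk: the sum of the weights of its edges. -/
def walkWt {α : Type*} {H : SimpleGraph α} (w : Sym2 α → ℕ) {x y : α} (p : H.Walk x y) : ℕ :=
  (p.edges.map w).sum

/-- Weighted shortest-path distance (`0` if there is no path). -/
noncomputable def wdist {α : Type*} (H : SimpleGraph α) (w : Sym2 α → ℕ) (x y : α) : ℕ :=
  sInf {d : ℕ | ∃ p : H.Walk x y, p.IsPath ∧ walkWt w p = d}

/-- A shortest path in a weighted graph: a path of minimum weight. -/
def IsShortestPathW {α : Type*} {H : SimpleGraph α} (w : Sym2 α → ℕ) {x y : α}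
    (p : H.Walk x y) : Prop :=
  p.IsPath ∧ ∀ q : H.Walk x y, q.IsPath → walkWt w p ≤ walkWt w q

/-- The penultimate vertex of a walk (the predecessor of the final endpoint). -/
def penult {α : Type*} {H : SimpleGraph α} {x y : α} (p : H.Walk x y) : α :=
  p.getVert (p.length - 1)

/-- The weight function on `V¹ ⊕ V²` induced by `w` (each copy of a vertex is identified
with the original vertex). -/
def liftW {V : Type*} (w : Sym2 V → ℕ) : Sym2 (V ⊕ V) → ℕ :=
  fun e => w (e.map (Sum.elim id id))

/-- The bit-sampling graph `G_{i,j,k}` on two copies `V¹ ⊕ V²` of `V`: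
`u¹ ∼ v¹` iff `u ∼ v` in `G`; `u¹ ∼ v²` iff `u ∼ v` in `G`, the `i`-th bit of `u`'s label
equals `j`, and `w(u,v) > M/2ᵏ`; no edges inside `V²`. -/
def GIJK {V : Type*} (G : SimpleGraph V) (w : Sym2 V → ℕ) (M : ℕ) (label : V → ℕ)
    (i : ℕ) (j : Bool) (k : ℕ) : SimpleGraph (V ⊕ V) where
  Adj a b := match a, b with
    | Sum.inl u, Sum.inl v => G.Adj u v
    | Sum.inl u, Sum.inr v =>
        G.Adj u v ∧ (label u).testBit (i - 1) = j ∧ (M : ℝ) / 2 ^ k < (w s(u, v) : ℝ)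
    | Sum.inr v, Sum.inl u =>
        G.Adj u v ∧ (label u).testBit (i - 1) = j ∧ (M : ℝ) / 2 ^ k < (w s(u, v) : ℝ)
    | Sum.inr _, Sum.inr _ => False
  symm := by
    constructor
    rintro (u | u) (v | v) h
    · exact h.symm
    · exact h
    · exact h
    · exact h.elim
  loopless := by
    constructor
    rintro (u | u) h
    · exact G.irrefl h
    · exact h

/-- `d_C` between the base vertex of the closed walk `C` and its `t`-th vertex: the minimum
of the weights of the two arcs of `C` between them. -/
def dCyc {V : Type*} {G : SimpleGraph V} (w : Sym2 V → ℕ) {u : V} (C : G.Walk u u)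
    (t : ℕ) : ℕ :=
  min (((C.edges.take t).map w).sum) (walkWt w C - ((C.edges.take t).map w).sum)

lemma getVert_mem_support {V : Type*} {G : SimpleGraph V} {u v : V} (p : G.Walk u v)
    (i : ℕ) : p.getVert i ∈ p.support := by
  induction p generalizing i with
  | nil => cases i <;> simp [SimpleGraph.Walk.getVert]
  | cons h q ih =>
    cases i with
    | zero => simp
    | succ n =>
      rw [SimpleGraph.Walk.getVert_cons_succ]
      simp [ih n]

/-! If `π` avoids `z¹`, its projection to `G` and `σ` are two walks from `y` that reach `z` only
at their ends, from different predecessors, so together they close a cycle through `z` of weight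
at most `w(π) + w(σ)`. Otherwise the segment of `π` from `z¹` to `z²` projects to a closed walk
at `z`, which contains a cycle through `z` unless it leaves and returns along the same edge
`{z, c}`. That edge then occurs twice in the segment, and its last occurrence enters `V²`, so
`w(z, c) > M/2ᵏ`; as the part of `π` before `z¹` weighs at least `w(σ)`, this gives
`w(π) > w(σ) + M/2^(k-1)`. -/

open SimpleGraph Walk

section Weight

variable {α : Type*} {H : SimpleGraph α} (w : Sym2 α → ℕ)

lemma walkWt_cons {x y z : α} (h : H.Adj x y) (p : H.Walk y z) :
    walkWt w (cons h p) = w s(x, y) + walkWt w p := by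
  simp [walkWt]

lemma walkWt_append {x y z : α} (p : H.Walk x y) (q : H.Walk y z) :
    walkWt w (p.append q) = walkWt w p + walkWt w q := by
  simp [walkWt, edges_append]

lemma walkWt_concat {x y z : α} (p : H.Walk x y) (h : H.Adj y z) :
    walkWt w (p.concat h) = walkWt w p + w s(y, z) := by
  simp [walkWt, edges_concat]

lemma walkWt_reverse {x y : α} (p : H.Walk x y) : walkWt w p.reverse = walkWt w p := by
  simp [walkWt, edges_reverse, List.sum_reverse]

lemma walkWt_map {β : Type*} {H' : SimpleGraph β} (f : H →g H') (w : Sym2 β → ℕ) {x y : α}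
    (p : H.Walk x y) : walkWt w (p.map f) = walkWt (fun e => w (e.map f)) p := by
  simp [walkWt, edges_map, Function.comp_def]

lemma walkWt_bypass_le [DecidableEq α] {x y : α} (p : H.Walk x y) :
    walkWt w p.bypass ≤ walkWt w p :=
  (p.edges_bypass_sublist_edges.map w).sum_le_sum fun _ _ => Nat.zero_le _

variable {w} in
lemma IsShortestPathW.walkWt_le {x y : α} {σ : H.Walk x y} (hσ : IsShortestPathW w σ)
    (q : H.Walk x y) : walkWt w σ ≤ walkWt w q := by
  classical
  exact (hσ.2 q.bypass q.bypass_isPath).trans (walkWt_bypass_le w q)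

lemma exists_eq_concat {x y : α} (p : H.Walk x y) (hne : x ≠ y) :
    ∃ (c : α) (q : H.Walk x c) (h : H.Adj c y), p = q.concat h :=
  ⟨_, p.dropLast, p.adj_penultimate (p.not_nil_of_ne hne), (p.concat_dropLast _).symm⟩

/-- Since `z ∉ P` and `a ≠ c`, the edge `s(z, a)` does not occur in `P.concat hc`, so it closes
the bypass of that walk to a cycle. -/
lemma exists_isCycle_walkWt_le {z a c : α} (ha : H.Adj z a) (hc : H.Adj c z) (hac : a ≠ c)
    (P : H.Walk a c) (hz : z ∉ P.support) :
    ∃ D : H.Walk z z, D.IsCycle ∧ walkWt w D ≤ w s(z, a) + walkWt w P + w s(c, z) := by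
  classical
  have hza : s(z, a) ∉ (P.concat hc).edges := by
    simp only [edges_concat, List.concat_eq_append, List.mem_append, List.mem_singleton, not_or]
    refine ⟨fun h => hz (P.fst_mem_support_of_mem_edges h), fun h => ?_⟩
    rcases Sym2.eq_iff.mp h with ⟨rfl, -⟩ | ⟨-, rfl⟩
    · exact hc.ne rfl
    · exact hac rfl
  refine ⟨cons ha (P.concat hc).bypass, (cons_isCycle_iff _ ha).mpr
    ⟨bypass_isPath _, fun h => hza (edges_bypass_subset_edges _ h)⟩, ?_⟩
  have := walkWt_bypass_le w (P.concat hc)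
  rw [walkWt_concat] at this
  rw [walkWt_cons]
  omega

lemma exists_isCycle_of_concat_concat {y z c c' : α} (p : H.Walk y c) (hc : H.Adj c z)
    (q : H.Walk y c') (hc' : H.Adj c' z) (hcc' : c ≠ c') (hp : z ∉ p.support)
    (hq : z ∉ q.support) :
    ∃ D : H.Walk z z, D.IsCycle ∧
      walkWt w D ≤ walkWt w (p.concat hc) + walkWt w (q.concat hc') := by
  obtain ⟨D, hD, hDw⟩ := exists_isCycle_walkWt_le w hc.symm hc' hcc' (p.reverse.append q)
    (by simp [mem_support_append_iff, hp, hq])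
  refine ⟨D, hD, ?_⟩
  rw [walkWt_append, walkWt_reverse, Sym2.eq_swap] at hDw
  rw [walkWt_concat, walkWt_concat]
  omega

end Weight

lemma div_two_pow_pred_le (x : ℝ) (hx : 0 ≤ x) (k : ℕ) : x / 2 ^ (k - 1) ≤ 2 * (x / 2 ^ k) := by
  rcases k with _ | k
  · simp only [pow_zero, div_one]
    linarith
  · rw [Nat.add_sub_cancel, pow_succ, ← div_div, mul_div_cancel₀ _ two_ne_zero]

section GIJK

variable {V : Type*} {G : SimpleGraph V} {w : Sym2 V → ℕ} {M : ℕ} {label : V → ℕ} {i : ℕ}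
  {j : Bool} {k : ℕ}

def GIJK.proj : GIJK G w M label i j k →g G where
  toFun := Sum.elim id id
  map_rel' := by
    rintro (u | u) (v | v) h
    · exact h
    · exact h.1
    · exact h.1.symm
    · exact h.elim

lemma GIJK.exists_walk_proj {x x' : V ⊕ V} {a a' : V}
    (p : (GIJK G w M label i j k).Walk x x') (ha : Sum.elim id id x = a)
    (ha' : Sum.elim id id x' = a') :
    ∃ P : G.Walk a a', walkWt w P = walkWt (liftW w) p ∧
      ∀ v, v ∈ P.support ↔ Sum.inl v ∈ p.support ∨ Sum.inr v ∈ p.support := by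
  subst ha ha'
  refine ⟨p.map GIJK.proj, walkWt_map _ w p, fun v => ?_⟩
  simp [Walk.support_map, GIJK.proj]

lemma exists_isCycle_of_inl_not_mem_support {y z : V}
    (π : (GIJK G w M label i j k).Walk (Sum.inl y) (Sum.inr z)) (hπ : π.IsPath)
    (hz : Sum.inl z ∉ π.support) (σ : G.Walk y z) (hσ : σ.IsPath) (hyz : y ≠ z)
    (hpen : Sum.elim id id (penult π) ≠ penult σ) :
    ∃ D : G.Walk z z, D.IsCycle ∧ walkWt w D ≤ walkWt (liftW w) π + walkWt w σ := by
  obtain ⟨c | c, π', hc, rfl⟩ := exists_eq_concat π (by simp)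
  swap
  · exact hc.elim
  obtain ⟨c', σ', hc', rfl⟩ := exists_eq_concat σ hyz
  have hcc' : c ≠ c' := by
    change Sum.elim id id (π'.concat hc).penultimate ≠ (σ'.concat hc').penultimate at hpen
    rwa [penultimate_concat, penultimate_concat] at hpen
  obtain ⟨P, hPw, hPs⟩ := GIJK.exists_walk_proj π' (a := y) (a' := c) rfl rfl
  have hzP : z ∉ P.support := by
    rw [hPs, not_or]
    exact ⟨fun h => hz (by simp [support_concat, h]), ((concat_isPath_iff _).mp hπ).2⟩
  obtain ⟨D, hD, hDw⟩ := exists_isCycle_of_concat_concat w P hc.1 σ' hc' hcc' hzP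
    ((concat_isPath_iff _).mp hσ).2
  refine ⟨D, hD, hDw.trans_eq ?_⟩
  rw [walkWt_concat, walkWt_concat, walkWt_concat, hPw]
  rfl

lemma exists_isCycle_or_lt_walkWt {z : V}
    (p : (GIJK G w M label i j k).Walk (Sum.inl z) (Sum.inr z)) (hp : p.IsPath) :
    (∃ D : G.Walk z z, D.IsCycle ∧ walkWt w D ≤ walkWt (liftW w) p) ∨
      (M : ℝ) / 2 ^ (k - 1) < walkWt (liftW w) p := by
  obtain ⟨c | c, q, hc, rfl⟩ := exists_eq_concat p (by simp)
  swap
  · exact hc.elim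
  obtain ⟨b, hb, r, rfl⟩ := not_nil_iff.mp (q.not_nil_of_ne (by simpa using hc.1.ne'))
  rw [concat_isPath_iff, cons_isPath_iff] at hp
  obtain ⟨P, hPw, hPs⟩ := GIJK.exists_walk_proj r (a' := c) rfl rfl
  have hwt : walkWt (liftW w) ((cons hb r).concat hc) =
      w s(z, Sum.elim id id b) + walkWt w P + w s(c, z) := by
    rw [walkWt_concat, walkWt_cons, hPw]
    rfl
  rw [hwt]
  by_cases hbc : Sum.elim id id b = c
  · right
    have hcz : (M : ℝ) / 2 ^ k < w s(c, z) := hc.2.2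
    have hzb : (M : ℝ) / 2 ^ k < w s(z, Sum.elim id id b) := by
      rcases b with b | b
      · rw [hbc, Sym2.eq_swap]
        exact hcz
      · exact hb.2.2
    have := div_two_pow_pred_le (M : ℝ) M.cast_nonneg k
    push_cast
    linarith [(walkWt w P).cast_nonneg (α := ℝ)]
  · left
    have hzb : G.Adj z (Sum.elim id id b) := GIJK.proj.map_adj hb
    refine exists_isCycle_walkWt_le w hzb hc.1 hbc P ?_
    rw [hPs, not_or]
    exact ⟨hp.1.2, fun h => hp.2 (by simp [h])⟩

end GIJK

theorem stmt3_general {V : Type*} (G : SimpleGraph V) (w : Sym2 V → ℕ) (label : V → ℕ) (M : ℕ)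
    (i : ℕ) (j : Bool) (k : ℕ) (y z : V) (hyz : y ≠ z) (wt : ℕ)
    (π : (GIJK G w M label i j k).Walk (Sum.inl y) (Sum.inr z))
    (hπ : IsShortestPathW (liftW w) π)
    (σ : G.Walk y z) (hσ : IsShortestPathW w σ)
    (h₁ : walkWt (liftW w) π + walkWt w σ = wt)
    (h₂ : Sum.elim id id (penult π) ≠ penult σ)
    (h₃ : (walkWt (liftW w) π : ℝ) ≤ (walkWt w σ : ℝ) + (M : ℝ) / 2 ^ (k - 1)) :
    ∃ D : G.Walk z z, D.IsCycle ∧ walkWt w D ≤ wt := by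
  classical
  by_cases hz : Sum.inl z ∈ π.support
  · have hsplit : walkWt (liftW w) π =
        walkWt (liftW w) (π.takeUntil _ hz) + walkWt (liftW w) (π.dropUntil _ hz) := by
      rw [← walkWt_append, take_spec]
    obtain ⟨P, hPw, -⟩ := GIJK.exists_walk_proj (π.takeUntil _ hz) (a := y) (a' := z) rfl rfl
    have hσP : walkWt w σ ≤ walkWt (liftW w) (π.takeUntil _ hz) := hPw ▸ hσ.walkWt_le P
    rcases exists_isCycle_or_lt_walkWt _ (hπ.1.dropUntil hz) with ⟨D, hD, hDw⟩ | hlt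
    · exact ⟨D, hD, by omega⟩
    · rw [hsplit, Nat.cast_add] at h₃
      have : (walkWt w σ : ℝ) ≤ walkWt (liftW w) (π.takeUntil _ hz) := by exact_mod_cast hσP
      linarith
  · obtain ⟨D, hD, hDw⟩ := exists_isCycle_of_inl_not_mem_support π hπ.1 hz σ hσ.1 hyz h₂
    exact ⟨D, hD, h₁ ▸ hDw⟩

/-- `G` with positive integer weights (largest `M`, smallest `mh`,
`ρ = M/mh`; vertices labeled injectively by `{0, …, n-1}`).  Suppose there are
`i ∈ {1, …, ⌈log₂ n⌉}`, `j ∈ {0,1}`, `k ∈ {1, …, ⌈log₂ ρ⌉}`, distinct vertices `y, z`, a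
shortest path `π` from `y¹` to `z²` in `G_{i,j,k}` and a shortest path `σ` from `y` to `z`
in `G` such that: (1) `w(π) + w(σ) = wt`; (2) the predecessor of `z²` on `π` (viewed in `V`)
differs from the predecessor of `z` on `σ`; (3) `w(π) ≤ w(σ) + M/2^(k-1)`.
Then `G` contains a simple cycle through `z` of weight at most `wt`. -/
theorem stmt3 {V : Type*} [Fintype V] [DecidableEq V] (G : SimpleGraph V)
    (w : Sym2 V → ℕ) (hw : ∀ e ∈ G.edgeSet, 0 < w e)
    (label : V → ℕ) (hinj : Function.Injective label)
    (hlab : ∀ v, label v < Fintype.card V)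
    (M mh : ℕ)
    (hM : ∀ e ∈ G.edgeSet, w e ≤ M) (hM' : ∃ e ∈ G.edgeSet, w e = M)
    (hm : ∀ e ∈ G.edgeSet, mh ≤ w e) (hm' : ∃ e ∈ G.edgeSet, w e = mh)
    (i : ℕ) (hi₁ : 1 ≤ i) (hi₂ : i ≤ Nat.clog 2 (Fintype.card V)) (j : Bool)
    (k : ℕ) (hk₁ : 1 ≤ k) (hk₂ : k ≤ ⌈Real.logb 2 ((M : ℝ) / (mh : ℝ))⌉₊)
    (y z : V) (hyz : y ≠ z) (wt : ℕ)
    (π : (GIJK G w M label i j k).Walk (Sum.inl y) (Sum.inr z))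
    (hπ : IsShortestPathW (liftW w) π)
    (σ : G.Walk y z) (hσ : IsShortestPathW w σ)
    (h₁ : walkWt (liftW w) π + walkWt w σ = wt)
    (h₂ : Sum.elim id id (penult π) ≠ penult σ)
    (h₃ : (walkWt (liftW w) π : ℝ) ≤ (walkWt w σ : ℝ) + (M : ℝ) / 2 ^ (k - 1)) :
    ∃ D : G.Walk z z, D.IsCycle ∧ walkWt w D ≤ wt :=
  stmt3_general G w label M i j k y z hyz wt π hπ σ hσ h₁ h₂ h₃

end Stmt3
end

section
/- Let G be a finite simple undirected graph with positive real edge weights, let x ≠ y be vertices of G, and let P₁ and P₂ be simple paths from x to y such that the edge of P₁ incident to y is different from the edge of P₂ incident to y. Then G contains a simple cycle passing through y, all of whose edges belong to the union of the edge sets of P₁ and P₂, of weight at most w(P₁) + w(P₂). -/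
/-!
Reverse `P₁` so that it leaves `y` along its last edge `y b`. That edge is not on `P₂`, since in a
path the only edge at the final vertex is the last one; nor is it on the rest of `P₁` after `b`,
which avoids `y`. So the walk from `b` along `P₁` back to `x` and then along `P₂` to `y`, shortened
to a path, closes up with the edge `y b` into a cycle. Its edges are distinct and all lie on `P₁`
or `P₂`, whence its weight is at most `w(P₁) + w(P₂)`.
-/

namespace Stmt7

/-- The weight of a walk: the sum of the weights of its edges. -/
def walkWt {V : Type*} {G : SimpleGraph V} (w : Sym2 V → ℝ) {x y : V} (p : G.Walk x y) : ℝ :=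
  (p.edges.map w).sum

/-- The penultimate vertex of a walk (the predecessor of the final endpoint). -/
def penult {V : Type*} {G : SimpleGraph V} {x y : V} (p : G.Walk x y) : V :=
  p.getVert (p.length - 1)

end Stmt7

theorem List.sum_map_le_sum_map_of_nodup_of_subset {ι M : Type*} [AddCommMonoid M]
    [PartialOrder M] [IsOrderedAddMonoid M] {l₁ l₂ : List ι} (hl₁ : l₁.Nodup) (h : l₁ ⊆ l₂)
    (f : ι → M) (hf : ∀ i ∈ l₂, 0 ≤ f i) : (l₁.map f).sum ≤ (l₂.map f).sum := by
  obtain ⟨l, hperm, hsub⟩ := List.subperm_of_subset hl₁ h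
  rw [← (hperm.map f).sum_eq]
  exact (hsub.map f).sum_le_sum (by simpa using hf)

namespace SimpleGraph.Walk

variable {V : Type*} {G : SimpleGraph V}

theorem IsPath.exists_isCycle_edges_subset_append {u w : V} {q : G.Walk u w} (hq : q.IsPath)
    (hnil : ¬q.Nil) (r : G.Walk w u) (hr : s(u, q.snd) ∉ r.edges) :
    ∃ c : G.Walk u u, c.IsCycle ∧ c.edges ⊆ q.edges ++ r.edges := by
  classical
  have hu : u ∉ q.tail.support := by
    rw [← q.cons_tail_eq hnil, cons_isPath_iff] at hq
    exact hq.2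
  have hedges : q.edges = s(u, q.snd) :: q.tail.edges := by
    conv_lhs => rw [← q.cons_tail_eq hnil]
    rfl
  set b := (q.tail.append r).bypass
  have hb : b.edges ⊆ q.tail.edges ++ r.edges := by
    simpa only [edges_append] using edges_bypass_subset_edges (q.tail.append r)
  refine ⟨cons (q.adj_snd hnil) b, ?_, ?_⟩
  · refine (cons_isCycle_iff _ _).mpr ⟨bypass_isPath _, fun he => ?_⟩
    rcases List.mem_append.mp (hb he) with he | he
    · exact hu (q.tail.fst_mem_support_of_mem_edges he)
    · exact hr he
  · rw [edges_cons, hedges, List.cons_append]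
    exact List.cons_subset_cons _ hb

end SimpleGraph.Walk

namespace Stmt7

open SimpleGraph Walk

theorem walkWt_le_add_of_isTrail {V : Type*} {G : SimpleGraph V} {w : Sym2 V → ℝ}
    (hw : ∀ e ∈ G.edgeSet, 0 ≤ w e) {u v a b c d : V} {D : G.Walk u v} (hD : D.IsTrail)
    {p : G.Walk a b} {q : G.Walk c d} (h : ∀ e ∈ D.edges, e ∈ p.edges ∨ e ∈ q.edges) :
    walkWt w D ≤ walkWt w p + walkWt w q := by
  unfold walkWt
  rw [← List.sum_append, ← List.map_append]
  refine List.sum_map_le_sum_map_of_nodup_of_subset hD.edges_nodup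
    (fun e he => List.mem_append.mpr (h e he)) w fun e he => hw e ?_
  rcases List.mem_append.mp he with he | he
  · exact p.edges_subset_edgeSet he
  · exact q.edges_subset_edgeSet he

theorem stmt7_general {V : Type*} (G : SimpleGraph V) (w : Sym2 V → ℝ)
    (hw : ∀ e ∈ G.edgeSet, 0 < w e)
    (x y : V)
    (P₁ P₂ : G.Walk x y) (h₁ : P₁.IsPath) (h₂ : P₂.IsPath)
    (hlast : s(penult P₁, y) ≠ s(penult P₂, y)) :
    ∃ D : G.Walk y y, D.IsCycle ∧
      (∀ e ∈ D.edges, e ∈ P₁.edges ∨ e ∈ P₂.edges) ∧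
      walkWt w D ≤ walkWt w P₁ + walkWt w P₂ := by
  have hxy : x ≠ y := by
    rintro rfl
    rw [isPath_iff_nil, ← eq_nil_iff_nil] at h₁ h₂
    subst h₁ h₂
    exact hlast rfl
  have hfirst : s(y, P₁.reverse.snd) ∉ P₂.edges := fun he => by
    rw [snd_reverse] at he
    exact hlast (congrArg (s(·, y)) (h₂.eq_penultimate_of_mem_edges he))
  obtain ⟨D, hD, hDe⟩ :=
    h₁.reverse.exists_isCycle_edges_subset_append (not_nil_of_ne hxy.symm) P₂ hfirst
  have hsub : ∀ e ∈ D.edges, e ∈ P₁.edges ∨ e ∈ P₂.edges := fun e he => by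
    simpa [edges_reverse] using hDe he
  exact ⟨D, hD, hsub, walkWt_le_add_of_isTrail (fun e he => (hw e he).le) hD.isTrail hsub⟩

/-- If `P₁` and `P₂` are simple paths from `x` to `y` (`x ≠ y`) in a graph with
positive real edge weights, and the edge of `P₁` incident to `y` differs from the edge of
`P₂` incident to `y`, then `G` contains a simple cycle through `y`, all of whose edges lie in
the union of the edge sets of `P₁` and `P₂`, of weight at most `w(P₁) + w(P₂)`. -/
theorem stmt7 {V : Type*} [Fintype V] (G : SimpleGraph V) (w : Sym2 V → ℝ)
    (hw : ∀ e ∈ G.edgeSet, 0 < w e)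
    (x y : V) (hxy : x ≠ y)
    (P₁ P₂ : G.Walk x y) (h₁ : P₁.IsPath) (h₂ : P₂.IsPath)
    (hlast : s(penult P₁, y) ≠ s(penult P₂, y)) :
    ∃ D : G.Walk y y, D.IsCycle ∧
      (∀ e ∈ D.edges, e ∈ P₁.edges ∨ e ∈ P₂.edges) ∧
      walkWt w D ≤ walkWt w P₁ + walkWt w P₂ :=
  stmt7_general G w hw x y P₁ P₂ h₁ h₂ hlast

end Stmt7
end

section
/- Let G = (V, E) be a finite simple undirected graph, r ≥ 1 an integer, and x ∈ V, and let G_x be the graph built from G, r and x as in the context. Then: (a) two distinct vertices u, v ∈ V₁ have a common neighbor in G_x (equivalently, are at distance exactly 2 in G_x) if and only if {x} ∪ u ∪ v is not a dominating set of G. Consequently, if |V| ≥ 2r + 1, then: (b) if G has a dominating set of size 2r + 1 containing x, then some pair of distinct vertices of V₁ is at distance greater than 2 in G_x, whereas if G has no dominating set of size 2r + 1 containing x, then every pair of distinct vertices of V₁ is at distance exactly 2 in G_x. -/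
namespace Stmt12

/-- `S` dominates `x`: `x ∈ S` or some vertex of `S` is adjacent to `x`. -/
def Dominates {V : Type*} (G : SimpleGraph V) (S : Finset V) (x : V) : Prop :=
  x ∈ S ∨ ∃ v ∈ S, G.Adj v x

/-- `S` is a dominating set of `G`. -/
def IsDomSet {V : Type*} (G : SimpleGraph V) (S : Finset V) : Prop :=
  ∀ x, Dominates G S x

/-- The graph `G_x` built from `G`, `r` and `x`: its vertices are `V₁ ⊕ V₂` where `V₁` is
the set of `r`-element subsets of `V` and `V₂ = V ∖ N[x]` (the vertices outside the closed
neighborhood of `x`); `u ∈ V₁` is adjacent to `w ∈ V₂` iff the set `u` does not dominate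
`w`; `V₂` induces a clique; there are no edges inside `V₁`. -/
def Gx {V : Type*} [DecidableEq V] (G : SimpleGraph V) (r : ℕ) (x : V) :
    SimpleGraph ({s : Finset V // s.card = r} ⊕ {y : V // ¬ (y = x ∨ G.Adj x y)}) where
  Adj a b := match a, b with
    | Sum.inl _, Sum.inl _ => False
    | Sum.inl u, Sum.inr y => ¬ Dominates G u.1 y.1
    | Sum.inr y, Sum.inl u => ¬ Dominates G u.1 y.1
    | Sum.inr y, Sum.inr y' => y ≠ y'
  symm := by
    constructor
    rintro (u | u) (v | v) h
    · exact h.elim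
    · exact h
    · exact h
    · exact h.symm
  loopless := by
    constructor
    rintro (u | u) h
    · exact h
    · exact h rfl

/-! Since `V₁` is independent in `G_x`, two `r`-sets `u ≠ v` are at distance 2 exactly when they
have a common neighbour, which must lie in `V ∖ N[x]` and be dominated by neither `u` nor `v`:
that is, a vertex not dominated by `{x} ∪ u ∪ v`. For (b), a dominating set `D ∋ x` of size
`2r + 1` splits `D ∖ {x}` into two distinct `r`-sets without a common neighbour; conversely a
dominating `{x} ∪ u ∪ v` has at most `2r + 1` elements and can be padded to exactly `2r + 1`. -/

section Development

open SimpleGraph Finset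

section Graphs

variable {W : Type*} {H : SimpleGraph W} {a b : W}

lemma dist_eq_two_iff_exists_common_adj (hab : a ≠ b) (hnadj : ¬H.Adj a b) :
    H.dist a b = 2 ↔ ∃ c, H.Adj a c ∧ H.Adj c b := by
  rw [SimpleGraph.dist, ENat.toNat_eq_iff two_ne_zero, Nat.cast_ofNat, edist_eq_two_iff]
  simp only [hab, hnadj, ne_eq, not_false_eq_true, true_and, Set.Nonempty, mem_commonNeighbors,
    H.adj_comm b]

lemma two_lt_length_of_not_exists_common_adj (hab : a ≠ b) (hnadj : ¬H.Adj a b)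
    (hnc : ¬∃ c, H.Adj a c ∧ H.Adj c b) (p : H.Walk a b) : 2 < p.length := by
  have h2 : 2 < H.edist a b := by
    rw [two_lt_edist_iff, Set.eq_empty_iff_forall_notMem]
    exact ⟨hab, hnadj, fun c hc => hnc ⟨c, hc.1, hc.2.symm⟩⟩
  exact_mod_cast h2.trans_le p.edist_le

end Graphs

lemma exists_ne_union_eq_of_card_eq_two_mul {α : Type*} [DecidableEq α] {s : Finset α}
    {r : ℕ} (hr : 1 ≤ r) (hs : s.card = 2 * r) :
    ∃ A B : Finset α, A.card = r ∧ B.card = r ∧ A ≠ B ∧ A ∪ B = s := by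
  obtain ⟨A, hAs, hA⟩ := s.exists_subset_card_eq (n := r) (by omega)
  refine ⟨A, s \ A, hA, by rw [card_sdiff_of_subset hAs]; omega, ?_, union_sdiff_of_subset hAs⟩
  intro hAB
  obtain ⟨a, ha⟩ := card_pos.mp (hA ▸ hr : 0 < A.card)
  exact (mem_sdiff.mp (hAB ▸ ha)).2 ha

lemma IsDomSet.mono {V : Type*} {G : SimpleGraph V} {S T : Finset V} (hST : S ⊆ T)
    (hS : IsDomSet G S) : IsDomSet G T := by
  intro y
  rcases hS y with hy | ⟨w, hw, hadj⟩
  · exact Or.inl (hST hy)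
  · exact Or.inr ⟨w, hST hw, hadj⟩

variable {V : Type*} [DecidableEq V] {G : SimpleGraph V}

lemma not_isDomSet_insert_union_iff {a : V} {S T : Finset V} :
    ¬IsDomSet G (insert a (S ∪ T)) ↔
      ∃ y, ¬(y = a ∨ G.Adj a y) ∧ ¬Dominates G S y ∧ ¬Dominates G T y := by
  simp only [IsDomSet, Dominates, mem_insert, mem_union]
  grind

variable {r : ℕ} {x : V} {u v : {s : Finset V // s.card = r}}

lemma Gx_not_adj_inl_inl : ¬(Gx G r x).Adj (.inl u) (.inl v) := id

lemma Gx_exists_common_adj_iff :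
    (∃ c, (Gx G r x).Adj (.inl u) c ∧ (Gx G r x).Adj c (.inl v)) ↔
      ¬IsDomSet G (insert x (u.1 ∪ v.1)) := by
  rw [not_isDomSet_insert_union_iff]
  constructor
  · rintro ⟨(w | y), hu, hv⟩
    · exact hu.elim
    · exact ⟨y, y.2, hu, hv⟩
  · rintro ⟨y, hy, hu, hv⟩
    exact ⟨.inr ⟨y, hy⟩, hu, hv⟩

lemma Gx_dist_eq_two_iff (huv : u ≠ v) :
    (Gx G r x).dist (.inl u) (.inl v) = 2 ↔ ¬IsDomSet G (insert x (u.1 ∪ v.1)) :=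
  (dist_eq_two_iff_exists_common_adj (by simpa using huv) Gx_not_adj_inl_inl).trans
    Gx_exists_common_adj_iff

lemma Gx_exists_far_pair_of_isDomSet (hr : 1 ≤ r) {D : Finset V} (hD : D.card = 2 * r + 1)
    (hxD : x ∈ D) (hDdom : IsDomSet G D) :
    ∃ u v : {s : Finset V // s.card = r}, u ≠ v ∧
      ∀ p : (Gx G r x).Walk (.inl u) (.inl v), 2 < p.length := by
  obtain ⟨A, B, hA, hB, hAB, hABD⟩ := exists_ne_union_eq_of_card_eq_two_mul hr
    (s := D.erase x) (by rw [card_erase_of_mem hxD, hD]; rfl)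
  refine ⟨⟨A, hA⟩, ⟨B, hB⟩, by simpa using hAB,
    two_lt_length_of_not_exists_common_adj (by simpa using hAB) Gx_not_adj_inl_inl ?_⟩
  rw [Gx_exists_common_adj_iff, not_not]
  simpa [hABD, insert_erase hxD] using hDdom

lemma Gx_dist_eq_two_of_not_exists_isDomSet [Fintype V] (hV : 2 * r + 1 ≤ Fintype.card V)
    (hnoD : ¬∃ D : Finset V, D.card = 2 * r + 1 ∧ x ∈ D ∧ IsDomSet G D) (huv : u ≠ v) :
    (Gx G r x).dist (.inl u) (.inl v) = 2 := by
  rw [Gx_dist_eq_two_iff huv]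
  intro hdom
  have hcard : (insert x (u.1 ∪ v.1)).card ≤ 2 * r + 1 :=
    calc (insert x (u.1 ∪ v.1)).card ≤ (u.1 ∪ v.1).card + 1 := card_insert_le _ _
      _ ≤ u.1.card + v.1.card + 1 := by grw [card_union_le]
      _ = 2 * r + 1 := by rw [u.2, v.2, two_mul]
  obtain ⟨D, hsub, hD⟩ := exists_superset_card_eq hcard hV
  exact hnoD ⟨D, hD, hsub (mem_insert_self _ _), hdom.mono hsub⟩

end Development

/-- (a) two distinct `u, v ∈ V₁` have a common neighbor in `G_x`
(equivalently, are at distance exactly `2` in `G_x`) iff `{x} ∪ u ∪ v` is not a dominating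
set of `G`.  Consequently, if `|V| ≥ 2r + 1`, then: (b) if `G` has a dominating set of size
`2r + 1` containing `x`, some pair of distinct vertices of `V₁` is at distance greater
than `2` in `G_x` (every walk between them has length `> 2`), whereas if `G` has no
dominating set of size `2r + 1` containing `x`, every pair of distinct vertices of `V₁` is
at distance exactly `2` in `G_x`. -/
theorem stmt12 {V : Type*} [Fintype V] [DecidableEq V] (G : SimpleGraph V)
    (r : ℕ) (hr : 1 ≤ r) (x : V) :
    (∀ u v : {s : Finset V // s.card = r}, u ≠ v →
      (((∃ c, (Gx G r x).Adj (Sum.inl u) c ∧ (Gx G r x).Adj c (Sum.inl v)) ↔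
          ¬ IsDomSet G (insert x (u.1 ∪ v.1))) ∧
        ((Gx G r x).dist (Sum.inl u) (Sum.inl v) = 2 ↔
          ¬ IsDomSet G (insert x (u.1 ∪ v.1))))) ∧
    (2 * r + 1 ≤ Fintype.card V →
      ((∃ D : Finset V, D.card = 2 * r + 1 ∧ x ∈ D ∧ IsDomSet G D) →
        ∃ u v : {s : Finset V // s.card = r}, u ≠ v ∧
          ∀ p : (Gx G r x).Walk (Sum.inl u) (Sum.inl v), 2 < p.length) ∧
      (¬ (∃ D : Finset V, D.card = 2 * r + 1 ∧ x ∈ D ∧ IsDomSet G D) →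
        ∀ u v : {s : Finset V // s.card = r}, u ≠ v →
          (Gx G r x).dist (Sum.inl u) (Sum.inl v) = 2)) :=
  ⟨fun _ _ huv => ⟨Gx_exists_common_adj_iff, Gx_dist_eq_two_iff huv⟩,
    fun hV => ⟨fun ⟨_, hD, hxD, hDdom⟩ => Gx_exists_far_pair_of_isDomSet hr hD hxD hDdom,
      fun hnoD _ _ huv => Gx_dist_eq_two_of_not_exists_isDomSet hV hnoD huv⟩⟩

end Stmt12
end

section
/- Let G = (V, E, w) be a finite simple undirected graph with positive real edge weights, with its n ≥ 2 vertices labeled injectively by integers in {0, …, n−1}, and let x ∈ V. For each i ∈ {1, …, ⌈log₂ n⌉} let G_i be the graph obtained from G by the bit-sampling split of x (as in the context). Then: (a) for every simple cycle C through x in G there exists i ∈ {1, …, ⌈log₂ n⌉} such that replacing the two occurrences of x on C by x_{0,i} and x_{1,i} (in the appropriate order) yields a simple path from x_{0,i} to x_{1,i} in G_i of the same total weight as C; and (b) conversely, every simple path from x_{0,i} to x_{1,i} in G_i yields, upon identifying x_{0,i} and x_{1,i} with x, a simple cycle through x in G of the same total weight. -/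
/-!
The two neighbours of `x` on a cycle carry distinct labels below `n ≤ 2 ^ ⌈log₂ n⌉`, so one of
the lowest `⌈log₂ n⌉` bits separates them; in `G_i` for that bit, the cycle cut open at `x` and
read from the neighbour whose bit is `0` is a path from `x_{0,i}` to `x_{1,i}`.
Conversely, identifying `x_{0,i}` and `x_{1,i}` with `x` is a graph homomorphism `G_i → G` that
is injective away from `x_{0,i}`, so a path from `x_{0,i}` to `x_{1,i}` maps to a closed walk
without repeated vertices after the first; as no vertex is adjacent to both copies of `x`, that
path has length at least `3`, so its image is a cycle. Weights are carried along the same map.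
-/

namespace Stmt13

/-- The weight of a walk: the sum of the weights of its edges. -/
def walkWt {α : Type*} {H : SimpleGraph α} (w : Sym2 α → ℝ) {x y : α} (p : H.Walk x y) : ℝ :=
  (p.edges.map w).sum

/-- The map identifying the two split copies `x_{0,i} = inr false` and `x_{1,i} = inr true`
with `x`, and every other vertex with itself. -/
def stripX {V : Type*} (x : V) : ({v : V // v ≠ x} ⊕ Bool) → V :=
  Sum.elim Subtype.val (fun _ => x)

/-- The bit-sampling split `G_i` of `G` at the vertex `x`: delete `x`, add two new vertices
`x_{0,i} = inr false` and `x_{1,i} = inr true`; every neighbor `y` of `x` is joined to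
`x_{0,i}` if the `i`-th bit of `y`'s label is `0`, and to `x_{1,i}` otherwise; all edges of
`G` not incident to `x` are kept. -/
def Gsplit {V : Type*} (G : SimpleGraph V) (label : V → ℕ) (x : V) (i : ℕ) :
    SimpleGraph ({v : V // v ≠ x} ⊕ Bool) where
  Adj a b := match a, b with
    | Sum.inl u, Sum.inl v => G.Adj u.1 v.1
    | Sum.inl u, Sum.inr b => G.Adj x u.1 ∧ (label u.1).testBit (i - 1) = b
    | Sum.inr b, Sum.inl u => G.Adj x u.1 ∧ (label u.1).testBit (i - 1) = b
    | Sum.inr _, Sum.inr _ => False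
  symm := by
    constructor
    rintro (u | u) (v | v) h
    · exact h.symm
    · exact h
    · exact h
    · exact h.elim
  loopless := by
    constructor
    rintro (u | u) h
    · exact G.loopless.irrefl u.1 h
    · exact h.elim

end Stmt13

namespace Nat

theorem exists_lt_clog_testBit_ne {m m' n : ℕ} (h : m ≠ m') (hm : m < n) (hm' : m' < n) :
    ∃ j < clog 2 n, m.testBit j ≠ m'.testBit j := by
  by_contra! hbits
  refine h (eq_of_testBit_eq fun j => ?_)
  refine (lt_or_ge j (clog 2 n)).elim (hbits j) fun hj => ?_
  have hn : n ≤ 2 ^ j := (le_pow_clog one_lt_two n).trans (pow_le_pow_right₀ one_le_two hj)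
  rw [testBit_eq_false_of_lt (hm.trans_le hn), testBit_eq_false_of_lt (hm'.trans_le hn)]

end Nat

namespace SimpleGraph.Walk

variable {V W : Type*} {G : SimpleGraph V} {G' : SimpleGraph W}

theorem IsPath.map_of_injOn {f : G →g G'} {u v : V} {p : G.Walk u v} (hp : p.IsPath)
    (hf : Set.InjOn f {w | w ∈ p.support}) : (p.map f).IsPath :=
  (isPath_def _).2 (support_map f p ▸ hp.support_nodup.map_on fun _ ha _ hb => hf ha hb)

theorem IsCycle.exists_eq_cons_concat {u : V} {C : G.Walk u u} (hC : C.IsCycle) :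
    ∃ (a b : V) (ha : G.Adj u a) (r : G.Walk a b) (hb : G.Adj b u),
      C = cons ha (r.concat hb) := by
  cases C with
  | nil => exact absurd rfl hC.ne_nil
  | cons ha p =>
    cases p with
    | nil => simpa using hC.three_le_length
    | cons ha' q =>
      obtain ⟨b, r, hb, h⟩ := exists_cons_eq_concat ha' q
      exact ⟨_, b, ha, r, hb, by rw [h]⟩

variable {u a b : V} {ha : G.Adj u a} {r : G.Walk a b} {hb : G.Adj b u}

theorem reverse_cons_concat :
    (cons ha (r.concat hb)).reverse = cons hb.symm (r.reverse.concat ha.symm) := by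
  simp [reverse_cons, concat_eq_append]

theorem isPath_and_notMem_support_of_isCycle_cons_concat (hC : (cons ha (r.concat hb)).IsCycle) :
    r.IsPath ∧ u ∉ r.support :=
  (concat_isPath_iff hb).1 ((cons_isCycle_iff _ ha).1 hC).1

theorem ne_of_isCycle_cons_concat (hC : (cons ha (r.concat hb)).IsCycle) : a ≠ b := by
  rintro rfl
  obtain rfl := (isPath_iff_nil.1 (isPath_and_notMem_support_of_isCycle_cons_concat hC).1).eq_nil
  simpa using hC.three_le_length

end SimpleGraph.Walk

namespace Stmt13

open SimpleGraph

theorem walkWt_map {α β : Type*} {H : SimpleGraph α} {H' : SimpleGraph β} (f : H →g H')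
    (w : Sym2 β → ℝ) {u v : α} (p : H.Walk u v) :
    walkWt w (p.map f) = walkWt (fun e => w (Sym2.map f e)) p := by
  simp only [walkWt, Walk.edges_map, List.map_map]
  rfl

theorem walkWt_reverse {α : Type*} {H : SimpleGraph α} (w : Sym2 α → ℝ) {u v : α}
    (p : H.Walk u v) : walkWt w p.reverse = walkWt w p := by
  simp only [walkWt, Walk.edges_reverse, List.map_reverse, List.sum_reverse]

section

variable {V : Type*} {G : SimpleGraph V} {label : V → ℕ} {x : V} {i : ℕ}

variable (G label x i)

def stripHom : Gsplit G label x i →g G where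
  toFun := stripX x
  map_rel' := by
    rintro (u | u) (v | v) h
    exacts [h, h.1.symm, h.1, h.elim]

def inlHom : G.induce {v | v ≠ x} →g Gsplit G label x i where
  toFun v := Sum.inl v
  map_rel' h := h

-- The mapped walk ends at `stripX x (inr false)` and `stripX x (inr true)`, both `x` by `rfl`.
def collapseWalk (P : (Gsplit G label x i).Walk (Sum.inr false) (Sum.inr true)) : G.Walk x x :=
  (P.map (stripHom G label x i)).copy rfl rfl

variable {G label x i}

@[simp] theorem stripX_inr (b : Bool) : stripX x (Sum.inr b) = x := rfl

theorem stripX_injOn_compl_inr (b : Bool) : Set.InjOn (stripX x) {Sum.inr b}ᶜ := by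
  rintro (u | c) hu (v | d) hv h
  · exact congrArg Sum.inl (Subtype.ext h)
  · exact absurd h u.2
  · exact absurd h.symm v.2
  · simp only [Set.mem_compl_iff, Set.mem_singleton_iff, Sum.inr.injEq] at hu hv
    cases b <;> simp_all

theorem three_le_length (P : (Gsplit G label x i).Walk (Sum.inr false) (Sum.inr true)) :
    3 ≤ P.length := by
  match P with
  | .cons h₁ .nil => exact h₁.elim
  | .cons (v := .inr _) h₁ _ => exact h₁.elim
  | .cons (v := .inl _) h₁ (.cons h₂ .nil) => exact absurd (h₁.2.symm.trans h₂.2) (by simp)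
  | .cons _ (.cons _ (.cons _ _)) => simp

variable (P : (Gsplit G label x i).Walk (Sum.inr false) (Sum.inr true))

theorem support_collapseWalk :
    (collapseWalk G label x i P).support = P.support.map (stripX x) :=
  Walk.support_map _ _

theorem edges_collapseWalk :
    (collapseWalk G label x i P).edges = P.edges.map (Sym2.map (stripX x)) :=
  Walk.edges_map _ _

theorem length_collapseWalk : (collapseWalk G label x i P).length = P.length :=
  Walk.length_map _ _

theorem walkWt_collapseWalk (w : Sym2 V → ℝ) :
    walkWt w (collapseWalk G label x i P) = walkWt (fun e => w (Sym2.map (stripX x) e)) P :=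
  walkWt_map _ w P

variable {P} in
theorem isCycle_collapseWalk_of_isPath (hP : P.IsPath) :
    (collapseWalk G label x i P).IsCycle := by
  have hlen := length_collapseWalk P ▸ three_le_length P
  have hnil : ¬ (collapseWalk G label x i P).Nil := by
    rw [← Walk.length_eq_zero_iff]; omega
  refine Walk.isCycle_iff_isPath_tail_and_le_length.2 ⟨?_, hlen⟩
  have hnd := hP.support_nodup
  rw [← Walk.cons_tail_support, List.nodup_cons] at hnd
  rw [Walk.isPath_def, Walk.support_tail_of_not_nil _ hnil, support_collapseWalk, ← List.map_tail]
  exact hnd.2.map_on fun u hu v hv h =>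
    stripX_injOn_compl_inr false (ne_of_mem_of_not_mem hu hnd.1) (ne_of_mem_of_not_mem hv hnd.1) h

theorem exists_isPath_collapseWalk_eq_cons_concat {a b : V} (ha : G.Adj x a) (r : G.Walk a b)
    (hb : G.Adj b x) (hC : (Walk.cons ha (r.concat hb)).IsCycle)
    (hbit_a : (label a).testBit (i - 1) = false) (hbit_b : (label b).testBit (i - 1) = true) :
    ∃ P : (Gsplit G label x i).Walk (Sum.inr false) (Sum.inr true),
      P.IsPath ∧ collapseWalk G label x i P = Walk.cons ha (r.concat hb) := by
  obtain ⟨hr, hxr⟩ := Walk.isPath_and_notMem_support_of_isCycle_cons_concat hC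
  have hs : ∀ v ∈ r.support, v ∈ {v | v ≠ x} := fun v hv h => hxr (h ▸ hv)
  let r' : (Gsplit G label x i).Walk (Sum.inl ⟨a, hs a r.start_mem_support⟩)
      (Sum.inl ⟨b, hs b r.end_mem_support⟩) :=
    (r.induce _ hs).map (inlHom G label x i)
  have hsupp : r'.support.map (stripX x) = r.support := by
    rw [show r'.support = (r.induce _ hs).support.map (inlHom G label x i) from
      Walk.support_map _ _, Walk.support_induce, List.map_map]
    exact List.attachWith_map_subtype_val hs
  have hinr (c : Bool) : Sum.inr c ∉ r'.support := fun hc => hxr (hsupp ▸ List.mem_map_of_mem hc)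
  have e₁ : (Gsplit G label x i).Adj (Sum.inr false) (Sum.inl ⟨a, hs a r.start_mem_support⟩) :=
    ⟨ha, hbit_a⟩
  have e₂ : (Gsplit G label x i).Adj (Sum.inl ⟨b, hs b r.end_mem_support⟩) (Sum.inr true) :=
    ⟨hb.symm, hbit_b⟩
  refine ⟨.cons e₁ (r'.concat e₂), ?_, Walk.ext_support ?_⟩
  · have hr' : r'.IsPath := Walk.isPath_def _ |>.2 (hsupp ▸ hr.support_nodup).of_map
    refine (Walk.cons_isPath_iff _ _).2 ⟨(Walk.concat_isPath_iff _).2 ⟨hr', hinr true⟩, ?_⟩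
    simp [Walk.support_concat, hinr]
  · simp [support_collapseWalk, Walk.support_concat, hsupp]

theorem exists_isPath_collapseWalk_eq_of_isCycle {n : ℕ} (hinj : Function.Injective label)
    (hlab : ∀ v, label v < n) {C : G.Walk x x} (hC : C.IsCycle) :
    ∃ i, 1 ≤ i ∧ i ≤ Nat.clog 2 n ∧
      ∃ P : (Gsplit G label x i).Walk (Sum.inr false) (Sum.inr true),
        P.IsPath ∧ (collapseWalk G label x i P = C ∨ collapseWalk G label x i P = C.reverse) := by
  obtain ⟨a, b, ha, r, hb, rfl⟩ := hC.exists_eq_cons_concat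
  obtain ⟨j, hj, hne⟩ := Nat.exists_lt_clog_testBit_ne
    (hinj.ne (Walk.ne_of_isCycle_cons_concat hC)) (hlab a) (hlab b)
  refine ⟨j + 1, j.succ_pos, hj, ?_⟩
  cases hbit_a : (label a).testBit j
  · obtain ⟨P, hP, hPC⟩ := exists_isPath_collapseWalk_eq_cons_concat (i := j + 1)
      ha r hb hC hbit_a (by simpa [hbit_a] using hne.symm)
    exact ⟨P, hP, .inl hPC⟩
  · obtain ⟨P, hP, hPC⟩ := exists_isPath_collapseWalk_eq_cons_concat (i := j + 1)
      hb.symm r.reverse ha.symm (Walk.reverse_cons_concat ▸ hC.reverse)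
      (by simpa [hbit_a] using hne.symm) hbit_a
    exact ⟨P, hP, .inr (hPC.trans Walk.reverse_cons_concat.symm)⟩

end

theorem stmt13_general {V : Type*} [Fintype V] (G : SimpleGraph V)
    (w : Sym2 V → ℝ)
    (label : V → ℕ) (hinj : Function.Injective label)
    (hlab : ∀ v, label v < Fintype.card V)
    (x : V) :
    (∀ C : G.Walk x x, C.IsCycle →
      ∃ i, 1 ≤ i ∧ i ≤ Nat.clog 2 (Fintype.card V) ∧
        ∃ P : (Gsplit G label x i).Walk (Sum.inr false) (Sum.inr true),
          P.IsPath ∧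
          (P.edges.map (Sym2.map (stripX x)) = C.edges ∨
            P.edges.map (Sym2.map (stripX x)) = C.reverse.edges) ∧
          walkWt (fun e => w (Sym2.map (stripX x) e)) P = walkWt w C) ∧
    (∀ i, 1 ≤ i → i ≤ Nat.clog 2 (Fintype.card V) →
      ∀ P : (Gsplit G label x i).Walk (Sum.inr false) (Sum.inr true), P.IsPath →
        ∃ D : G.Walk x x, D.IsCycle ∧
          D.edges = P.edges.map (Sym2.map (stripX x)) ∧
          walkWt w D = walkWt (fun e => w (Sym2.map (stripX x) e)) P) := by
  refine ⟨fun C hC => ?_, fun i _ _ P hP => ?_⟩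
  · obtain ⟨i, hi, hic, P, hP, hPC⟩ := exists_isPath_collapseWalk_eq_of_isCycle hinj hlab hC
    refine ⟨i, hi, hic, P, hP, ?_, ?_⟩
    · rw [← edges_collapseWalk P]
      exact hPC.imp (congrArg _) (congrArg _)
    · rw [← walkWt_collapseWalk P w]
      obtain h | h := hPC
      · rw [h]
      · rw [h, walkWt_reverse]
  · exact ⟨collapseWalk G label x i P, isCycle_collapseWalk_of_isPath hP, edges_collapseWalk P,
      walkWt_collapseWalk P w⟩

/-- `G` with positive real edge weights, its `n ≥ 2` vertices labeled
injectively by `{0, …, n-1}`, and `x ∈ V`.  The weight of an edge of `G_i` is the weight of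
the corresponding edge of `G` (under the identification `stripX`).  Then:
(a) for every simple cycle `C` through `x` in `G` there is `i ∈ {1, …, ⌈log₂ n⌉}` such that
replacing the two occurrences of `x` on `C` by `x_{0,i}` and `x_{1,i}` (in the appropriate
order) yields a simple path from `x_{0,i}` to `x_{1,i}` in `G_i` (its edges project to the
edges of `C`, in order or in reverse order) of the same total weight as `C`; and
(b) conversely, every simple path from `x_{0,i}` to `x_{1,i}` in `G_i` yields, upon
identifying `x_{0,i}` and `x_{1,i}` with `x`, a simple cycle through `x` in `G` of the same
total weight. -/
theorem stmt13 {V : Type*} [Fintype V] [DecidableEq V] (G : SimpleGraph V)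
    (w : Sym2 V → ℝ) (hw : ∀ e ∈ G.edgeSet, 0 < w e)
    (hn : 2 ≤ Fintype.card V)
    (label : V → ℕ) (hinj : Function.Injective label)
    (hlab : ∀ v, label v < Fintype.card V)
    (x : V) :
    (∀ C : G.Walk x x, C.IsCycle →
      ∃ i, 1 ≤ i ∧ i ≤ Nat.clog 2 (Fintype.card V) ∧
        ∃ P : (Gsplit G label x i).Walk (Sum.inr false) (Sum.inr true),
          P.IsPath ∧
          (P.edges.map (Sym2.map (stripX x)) = C.edges ∨
            P.edges.map (Sym2.map (stripX x)) = C.reverse.edges) ∧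
          walkWt (fun e => w (Sym2.map (stripX x) e)) P = walkWt w C) ∧
    (∀ i, 1 ≤ i → i ≤ Nat.clog 2 (Fintype.card V) →
      ∀ P : (Gsplit G label x i).Walk (Sum.inr false) (Sum.inr true), P.IsPath →
        ∃ D : G.Walk x x, D.IsCycle ∧
          D.edges = P.edges.map (Sym2.map (stripX x)) ∧
          walkWt w D = walkWt (fun e => w (Sym2.map (stripX x) e)) P) :=
  stmt13_general G w label hinj hlab x

end Stmt13
end
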